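/- For any sequent S and any interpretation I, if S is a theorem of the basic infinitary system, then the reduct S^I is also a theorem of the basic system. -/

import Mathlib

open Classical

/-- Infinitary propositional formulas over a signature `σ`: atoms, set-indexed
conjunctions and disjunctions (represented by families indexed by a type,
which corresponds exactly to *bounded* sets of formulas in the hierarchy),
and implication. -/
inductive IForm (σ : Type) : Type 1
  | atom : σ → IForm σ
  | conj : (ι : Type) → (ι → IForm σ) → IForm σ
  | disj : (ι : Type) → (ι → IForm σ) → IForm σ
  | impl : IForm σ → IForm σ → IForm σ

namespace IForm

variable {σ : Type}

/-- `⊥` is the empty disjunction. -/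
def bot : IForm σ := disj Empty Empty.elim

/-- `¬F` abbreviates `F → ⊥`. -/
def neg (F : IForm σ) : IForm σ := impl F bot

/-- Binary conjunction `F ∧ G` as `{F, G}^∧`. -/
def and2 (F G : IForm σ) : IForm σ := conj Bool (fun b => cond b F G)

/-- Binary disjunction `F ∨ G` as `{F, G}^∨`. -/
def or2 (F G : IForm σ) : IForm σ := disj Bool (fun b => cond b F G)

/-- Ternary disjunction. -/
def or3 (F G H : IForm σ) : IForm σ := disj (Fin 3) (fun i => [F, G, H].get i)

/-- `F ↔ G` abbreviates `(F → G) ∧ (G → F)`. -/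
def biimp (F G : IForm σ) : IForm σ := and2 (impl F G) (impl G F)

/-- Satisfaction of an infinitary formula by an interpretation `I ⊆ σ`. -/
def sat (I : Set σ) : IForm σ → Prop
  | atom p => p ∈ I
  | conj _ f => ∀ i, sat I (f i)
  | disj _ f => ∃ i, sat I (f i)
  | impl F G => sat I F → sat I G

/-- The reduct `F^I` of a formula w.r.t. an interpretation `I`. -/
noncomputable def reduct (I : Set σ) : IForm σ → IForm σ
  | atom p => if p ∈ I then atom p else bot
  | conj ι f => conj ι (fun i => reduct I (f i))
  | disj ι f => disj ι (fun i => reduct I (f i))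
  | impl F G => if sat I (impl F G) then impl (reduct I F) (reduct I G) else bot

/-- `I` satisfies a set of formulas if it satisfies all its elements. -/
def satSet (I : Set σ) (H : Set (IForm σ)) : Prop := ∀ F ∈ H, sat I F

/-- `I` is a stable model of a set `H` of formulas if it is minimal w.r.t.
set inclusion among the interpretations satisfying the reduct `H^I`. -/
def StableModel (I : Set σ) (H : Set (IForm σ)) : Prop :=
  satSet I (reduct I '' H) ∧ ∀ J : Set σ, satSet J (reduct I '' H) → J ⊆ I → J = I

noncomputable instance : DecidableEq (IForm σ) := Classical.decEq _

/-- The basic infinitary system of natural deduction: sequents `Γ ⇒ F` where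
`Γ` is a finite set of infinitary formulas.  Axiom `F ⇒ F`; introduction and
elimination rules for set-indexed conjunction and disjunction and for
implication; weakening. -/
inductive Deriv : Finset (IForm σ) → IForm σ → Prop
  | ax (F : IForm σ) : Deriv {F} F
  | conjI (Γ : Finset (IForm σ)) (ι : Type) (f : ι → IForm σ) :
      (∀ i, Deriv Γ (f i)) → Deriv Γ (conj ι f)
  | conjE (Γ : Finset (IForm σ)) (ι : Type) (f : ι → IForm σ) (i : ι) :
      Deriv Γ (conj ι f) → Deriv Γ (f i)
  | disjI (Γ : Finset (IForm σ)) (ι : Type) (f : ι → IForm σ) (i : ι) :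
      Deriv Γ (f i) → Deriv Γ (disj ι f)
  | disjE (Γ Δ : Finset (IForm σ)) (ι : Type) (f : ι → IForm σ) (F : IForm σ) :
      Deriv Γ (disj ι f) → (∀ i, Deriv (insert (f i) Δ) F) → Deriv (Γ ∪ Δ) F
  | implI (Γ : Finset (IForm σ)) (F G : IForm σ) :
      Deriv (insert F Γ) G → Deriv Γ (impl F G)
  | implE (Γ Δ : Finset (IForm σ)) (F G : IForm σ) :
      Deriv Γ F → Deriv Δ (impl F G) → Deriv (Γ ∪ Δ) G
  | weak (Γ Δ : Finset (IForm σ)) (F : IForm σ) :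
      Deriv Γ F → Deriv (Γ ∪ Δ) F

end IForm

/-!
Induction on the derivation. The reduct commutes with `∧`, `∨` and with implications true in `I`,
so those rules map to the same rules on reducts. An implication false in `I` reduces to `⊥`: for
`→E` the reduced premise `⊥` yields anything, and for `→I` with `I ⊨ F`, `I ⊭ G`, soundness gives a
hypothesis `H ∈ Γ` false in `I`; the reduct of a formula false in `I` derives `⊥`, so `Γ^I` is
inconsistent and derives the reduct as well.
-/

namespace IForm

variable {σ : Type} {Γ Δ : Finset (IForm σ)} {F G : IForm σ} {I : Set σ}

namespace Deriv

theorem mono (h : Deriv Γ F) (hΓΔ : Γ ⊆ Δ) : Deriv Δ F := by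
  simpa [Finset.union_eq_right.2 hΓΔ] using weak Γ Δ F h

theorem of_mem (h : F ∈ Γ) : Deriv Γ F :=
  (ax F).mono (Finset.singleton_subset_iff.2 h)

theorem cut (hF : Deriv Γ F) (hG : Deriv {F} G) : Deriv Γ G := by
  simpa using implE Γ ∅ F G hF (implI ∅ F G (by simpa using hG))

theorem of_bot (h : Deriv Γ bot) : Deriv Γ F := by
  simpa using disjE Γ ∅ Empty Empty.elim F h (fun i => i.elim)

theorem sound (h : Deriv Γ F) (hΓ : ∀ G ∈ Γ, sat I G) : sat I F := by
  induction h with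
  | ax F => exact hΓ F (Finset.mem_singleton_self F)
  | conjI _ _ _ _ ih => exact fun i => ih i hΓ
  | conjE _ _ _ i _ ih => exact ih hΓ i
  | disjI _ _ _ i _ ih => exact ⟨i, ih hΓ⟩
  | disjE _ _ _ _ _ _ _ ih ihΔ =>
    rw [Finset.forall_mem_union] at hΓ
    obtain ⟨i, hi⟩ := ih hΓ.1
    exact ihΔ i (Finset.forall_mem_insert _ _ _ |>.2 ⟨hi, hΓ.2⟩)
  | implI _ _ _ _ ih => exact fun hF => ih (Finset.forall_mem_insert _ _ _ |>.2 ⟨hF, hΓ⟩)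
  | implE _ _ _ _ _ _ ihF ihFG =>
    rw [Finset.forall_mem_union] at hΓ
    exact ihFG hΓ.2 (ihF hΓ.1)
  | weak _ _ _ _ ih => exact ih (Finset.forall_mem_union.1 hΓ).1

theorem exists_mem_not_sat (h : Deriv Γ F) (hF : ¬ sat I F) : ∃ G ∈ Γ, ¬ sat I G := by
  by_contra! hΓ
  exact hF (h.sound hΓ)

end Deriv

theorem reduct_impl_of_sat (h : sat I (impl F G)) :
    reduct I (impl F G) = impl (reduct I F) (reduct I G) := by
  rw [reduct, if_pos h]

theorem reduct_impl_of_not_sat (h : ¬ sat I (impl F G)) : reduct I (impl F G) = bot := by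
  rw [reduct, if_neg h]

theorem deriv_reduct_bot_of_not_sat (h : ¬ sat I F) : Deriv {reduct I F} bot := by
  induction F with
  | atom p =>
    rw [reduct, if_neg (show p ∉ I from h)]
    exact Deriv.ax bot
  | conj ι f ih =>
    obtain ⟨i, hi⟩ := not_forall.1 h
    exact (Deriv.conjE _ ι _ i (Deriv.ax _)).cut (ih i hi)
  | disj ι f ih =>
    simpa [reduct] using Deriv.disjE _ ∅ ι _ bot (Deriv.ax _)
      (fun i => by simpa using ih i fun hi => h ⟨i, hi⟩)
  | impl F G =>
    rw [reduct_impl_of_not_sat h]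
    exact Deriv.ax bot

theorem deriv_image_reduct_bot_of_mem (hG : G ∈ Γ) (h : ¬ sat I G) :
    Deriv (Γ.image (reduct I)) bot :=
  (Deriv.of_mem (Finset.mem_image_of_mem _ hG)).cut (deriv_reduct_bot_of_not_sat h)

theorem Deriv.image_reduct_implI (hd : Deriv (insert F Γ) G)
    (ih : Deriv ((insert F Γ).image (reduct I)) (reduct I G)) :
    Deriv (Γ.image (reduct I)) (reduct I (impl F G)) := by
  by_cases hs : sat I (impl F G)
  · rw [reduct_impl_of_sat hs]
    exact implI _ _ _ (by rwa [Finset.image_insert] at ih)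
  · obtain ⟨hF, hG⟩ : sat I F ∧ ¬ sat I G := Classical.not_imp.1 hs
    obtain ⟨H, hH, hHn⟩ := hd.exists_mem_not_sat hG
    have hHΓ : H ∈ Γ := (Finset.mem_insert.1 hH).resolve_left (by rintro rfl; exact hHn hF)
    exact of_bot (deriv_image_reduct_bot_of_mem hHΓ hHn)

theorem Deriv.image_reduct_implE (hF : Deriv (Γ.image (reduct I)) (reduct I F))
    (hFG : Deriv (Δ.image (reduct I)) (reduct I (impl F G))) :
    Deriv ((Γ ∪ Δ).image (reduct I)) (reduct I G) := by
  rw [Finset.image_union]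
  by_cases hs : sat I (impl F G)
  · rw [reduct_impl_of_sat hs] at hFG
    exact implE _ _ _ _ hF hFG
  · rw [reduct_impl_of_not_sat hs] at hFG
    exact of_bot (hFG.mono Finset.subset_union_right)

end IForm

/-- For any sequent `Γ ⇒ F` and interpretation `I`, if `Γ ⇒ F`
is a theorem of the basic system, then so is its reduct `Γ^I ⇒ F^I`. -/
theorem basic_reduct_theorem {σ : Type} (Γ : Finset (IForm σ)) (F : IForm σ)
    (I : Set σ) (h : IForm.Deriv Γ F) :
    IForm.Deriv (Γ.image (IForm.reduct I)) (IForm.reduct I F) := by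
  open IForm in
  induction h with
  | ax F => simpa using Deriv.ax (reduct I F)
  | conjI _ ι _ _ ih => exact Deriv.conjI _ ι _ ih
  | conjE _ ι _ i _ ih => exact Deriv.conjE _ ι _ i ih
  | disjI _ ι _ i _ ih => exact Deriv.disjI _ ι _ i ih
  | disjE _ _ ι f _ _ _ ih ihΔ =>
    rw [Finset.image_union]
    exact Deriv.disjE _ _ ι (fun i => reduct I (f i)) _ ih
      (fun i => by simpa [Finset.image_insert] using ihΔ i)
  | implI _ _ _ hd ih => exact hd.image_reduct_implI ih
  | implE _ _ _ _ _ _ ihF ihFG => exact Deriv.image_reduct_implE ihF ihFG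
  | weak _ _ _ _ ih =>
    rw [Finset.image_union]
    exact Deriv.weak _ _ _ ih
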